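/- arXiv:1109.6095 — 2 statements merged into one kernel-verified Lean document; each statement's English description precedes it below -/
import Mathlib

section
/- Let R be a unital (not necessarily commutative) ring, let A, B ∈ R, set S₀ := 1 - B*A, S₁ := 1 - A*B, L := [[S₀, -(1+S₀)*B], [A, S₁]], L' := [[S₀, (1+S₀)*B], [-A, S₁]], P := L * e₁₁ * L' with e₁₁ := [[1,0],[0,0]], and e₂₂ := [[0,0],[0,1]]. Then P - e₂₂ = [[S₀², S₀*(1+S₀)*B], [S₁*A, -S₁²]]. -/
/-- With `S₀ = 1 - B*A`, `S₁ = 1 - A*B`, `L`, `L'` as in the Connes–Moscovici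
construction, `P := L * e₁₁ * L'` and `e₂₂ = [[0,0],[0,1]]`, one has
`P - e₂₂ = [[S₀², S₀*(1+S₀)*B], [S₁*A, -S₁²]]` (the residue matrix). -/
theorem stmt4 {R : Type*} [Ring R] (A B : R) :
    let S₀ : R := 1 - B * A
    let S₁ : R := 1 - A * B
    let L : Matrix (Fin 2) (Fin 2) R := !![S₀, -((1 + S₀) * B); A, S₁]
    let L' : Matrix (Fin 2) (Fin 2) R := !![S₀, (1 + S₀) * B; -A, S₁]
    let e₁₁ : Matrix (Fin 2) (Fin 2) R := !![1, 0; 0, 0]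
    let e₂₂ : Matrix (Fin 2) (Fin 2) R := !![0, 0; 0, 1]
    let P : Matrix (Fin 2) (Fin 2) R := L * e₁₁ * L'
    P - e₂₂ = !![S₀ ^ 2, S₀ * (1 + S₀) * B; S₁ * A, -(S₁ ^ 2)] := by
  intro S₀ S₁ L L' e₁₁ e₂₂ P
  ext i j
  fin_cases i <;> fin_cases j <;>
    simp [P, L, L', e₁₁, e₂₂, Matrix.mul_apply, Fin.sum_univ_two, S₀, S₁] <;>
    noncomm_ring
end

section
/- Let K be a field of characteristic zero, let A be a unital associative K-algebra, and for k ≥ 0 let C_k(A) := A^{⊗(k+1)} denote the (k+1)-fold tensor power of A over K. Let b : C_k(A) → C_{k-1}(A) be the Hochschild boundary, defined on pure tensors by b(f₀ ⊗ ⋯ ⊗ f_k) = Σ_{r=0}^{k-1} (-1)^r f₀ ⊗ ⋯ ⊗ (f_r f_{r+1}) ⊗ ⋯ ⊗ f_k + (-1)^k (f_k f₀) ⊗ f₁ ⊗ ⋯ ⊗ f_{k-1}, and let T : C_k(A) → C_k(A) be the signed cyclic permutation T(f₀ ⊗ ⋯ ⊗ f_k) = (-1)^k f₁ ⊗ ⋯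 ⊗ f_k ⊗ f₀. Then for every idempotent p ∈ A (p² = p) and every even natural number q ≥ 2, the chain p^{⊗(q+1)} ∈ C_q(A) satisfies: (a) T(p^{⊗(q+1)}) = p^{⊗(q+1)}; and (b) b(p^{⊗(q+1)}) lies in the range of the K-linear map (1 - T) : C_{q-1}(A) → C_{q-1}(A). Consequently the class of p^{⊗(q+1)} in the cyclic complex C_q(A)/Im(1-T) is a cycle. -/
open scoped TensorProduct

/-- Over a field `K` of characteristic zero and a unital `K`-algebra `A`,
let `b` be the Hochschild boundary `C_q(A) = A^{⊗(q+1)} → C_{q-1}(A) = A^{⊗q}` and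
`T`, `T'` the signed cyclic permutations on `C_q(A)` and `C_{q-1}(A)` respectively
(characterised by their action on pure tensors). Then for every idempotent `p ∈ A` and
every even `q ≥ 2`: (a) `T(p^{⊗(q+1)}) = p^{⊗(q+1)}`; (b) `b(p^{⊗(q+1)})` lies in the
range of `1 - T'`, so the class of `p^{⊗(q+1)}` in the cyclic complex is a cycle. -/
theorem stmt10 (K : Type*) [Field K] [CharZero K] (A : Type*) [Ring A] [Algebra K A]
    (p : A) (hp : p * p = p) (q : ℕ) (hq : 2 ≤ q) (hq2 : Even q)
    (b : (⨂[K] (_ : Fin (q + 1)), A) →ₗ[K] ⨂[K] (_ : Fin q), A)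
    (T : (⨂[K] (_ : Fin (q + 1)), A) →ₗ[K] ⨂[K] (_ : Fin (q + 1)), A)
    (T' : (⨂[K] (_ : Fin q), A) →ₗ[K] ⨂[K] (_ : Fin q), A)
    (hb : ∀ f : Fin (q + 1) → A,
      b (PiTensorProduct.tprod K f) =
        (∑ r : Fin q, ((-1 : K) ^ (r : ℕ)) •
          PiTensorProduct.tprod K (fun i : Fin q =>
            if (i : ℕ) < (r : ℕ) then f i.castSucc
            else if i = r then f r.castSucc * f r.succ
            else f i.succ)) +
        ((-1 : K) ^ q) • PiTensorProduct.tprod K (fun i : Fin q =>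
          if (i : ℕ) = 0 then f (Fin.last q) * f 0 else f i.castSucc))
    (hT : ∀ f : Fin (q + 1) → A,
      T (PiTensorProduct.tprod K f) =
        ((-1 : K) ^ q) • PiTensorProduct.tprod K (fun i => f (i + 1)))
    (hT' : ∀ f : Fin q → A,
      T' (PiTensorProduct.tprod K f) =
        ((-1 : K) ^ (q - 1)) • PiTensorProduct.tprod K
          (fun i : Fin q => f ⟨((i : ℕ) + 1) % q, Nat.mod_lt _ (by omega)⟩)) :
    T (PiTensorProduct.tprod K (fun _ : Fin (q + 1) => p)) =
      PiTensorProduct.tprod K (fun _ : Fin (q + 1) => p) ∧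
    b (PiTensorProduct.tprod K (fun _ : Fin (q + 1) => p)) ∈
      LinearMap.range (LinearMap.id - T') := by
  constructor
  · rw [hT, hq2.neg_one_pow, one_smul]
  · rw [hb]
    simp only [hp, ite_self]
    rw [← Finset.sum_smul, Fin.sum_univ_eq_sum_range, neg_one_geom_sum, if_pos hq2,
      zero_smul, zero_add, hq2.neg_one_pow, one_smul]
    refine ⟨(2 : K)⁻¹ • PiTensorProduct.tprod K (fun _ : Fin q => p), ?_⟩
    have hodd : Odd (q - 1) := Nat.Even.sub_odd (by omega) hq2 odd_one
    rw [LinearMap.sub_apply, LinearMap.id_apply, map_smul, hT', hodd.neg_one_pow,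
      neg_one_smul, smul_neg, sub_neg_eq_add, ← two_smul K, smul_smul]
    norm_num
end
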